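/- arXiv:1304.5618 — 2 statements merged into one kernel-verified Lean document; each statement's English description precedes it below -/
import Mathlib

section
/- Let W_s' = {D ∈ W_s : div D = 0} and W_s'' = {f𝔇 : f ∈ O_s}. If m − n + s ≢ 0 (mod p) then W_s = W_s' ⊕ W_s'' as vector spaces, while if m − n + s ≡ 0 (mod p) then W_s'' ⊆ W_s'. -/
/-!
The Euler field satisfies `div (f𝔇) = (m - n + s) f` for `f ∈ O_s`. Coefficientwise, an even
variable gives `∂_j (x_j x^(α)) = (α_j + 1) x^(α)`, which is also right when `α_j = p - 1` because
the truncated divided powers make the left side vanish while `p = 0` in `F`; an odd variable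
`ξ_j` contributes `-f` when it does not occur in the monomial and `0` otherwise. Since `div`
maps `W_s` into `O_s`, when `c = m - n + s` is a unit of `F` every `D ∈ W_s` splits as
`(D - (c⁻¹ div D)𝔇) + (c⁻¹ div D)𝔇`, and `D = f𝔇` with `div D = 0` forces `c f = 0`;
when `c = 0` in `F` every `f𝔇` is divergence free.
-/

open Finset

namespace Cartan

/-- Monomial index set for the divided power superalgebra `O(m,n)`:
a multi-exponent `α : Fin m → Fin p` (divided powers truncated at `p-1`)
together with a subset of the odd variables. -/
abbrev Mon (p m n : ℕ) := (Fin m → Fin p) × Finset (Fin n)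

/-- The divided power superalgebra `O(m,n)` realized as coefficient functions on monomials. -/
abbrev O (F : Type*) [Field F] (p m n : ℕ) := Mon p m n → F

/-- The Witt superalgebra `W(m,n)` realized as tuples of coefficients:
`D : W` represents `∑ i, D i · ∂ i`. -/
abbrev W (F : Type*) [Field F] (p m n : ℕ) := Fin (m + n) → O F p m n

variable {F : Type*} [Field F] {p m n : ℕ}

/-- `ℤ₂`-parity of a monomial. -/
def parMon (μ : Mon p m n) : ZMod 2 := (μ.2.card : ZMod 2)

/-- `ℤ`-degree of a monomial (each variable has degree 1). -/
def zdMon (μ : Mon p m n) : ℕ := (∑ i, (μ.1 i : ℕ)) + μ.2.card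

/-- Parity of the index `i`: even if `i < m`, odd otherwise. -/
def parIdx (m : ℕ) {k : ℕ} (i : Fin k) : ZMod 2 := if (i : ℕ) < m then 0 else 1

/-- The constant function `1 ∈ O(m,n)`. -/
def oneO (F : Type*) [Field F] (p m n : ℕ) [NeZero p] : O F p m n :=
  fun μ => if μ.1 = 0 ∧ μ.2 = (∅ : Finset (Fin n)) then 1 else 0

/-- Koszul sign for multiplying exterior monomials `x^s · x^t`. -/
def extSign {n : ℕ} (s t : Finset (Fin n)) : ℤ :=
  (-1) ^ ∑ i ∈ t, (s.filter fun j => i < j).card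

/-- Multiplication of the divided power superalgebra `O(m,n)`:
`x^(α)x^u · x^(β)x^v = (Koszul sign) · ∏ binom(α+β,α) · x^(α+β) x^(u∪v)`. -/
def mulO [NeZero p] (f g : O F p m n) : O F p m n := fun μ =>
  ∑ ν : Mon p m n, ∑ κ : Mon p m n,
    if (∀ i, (ν.1 i : ℕ) + (κ.1 i : ℕ) = (μ.1 i : ℕ)) ∧ ν.2 ∩ κ.2 = ∅ ∧ ν.2 ∪ κ.2 = μ.2 then
      ((extSign ν.2 κ.2 : ℤ) : F) * (∏ i, (((μ.1 i : ℕ).choose (ν.1 i : ℕ) : ℕ) : F))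
        * f ν * g κ
    else 0

/-- The even partial superderivation `∂_i`, `i ≤ m`, on `O(m,n)`. -/
def dEv [NeZero p] (i : Fin m) (f : O F p m n) : O F p m n := fun μ =>
  if h : (μ.1 i : ℕ) + 1 < p then f (Function.update μ.1 i ⟨(μ.1 i : ℕ) + 1, h⟩, μ.2) else 0

/-- The odd partial superderivation `∂_{m+i}` on `O(m,n)`. -/
def dOd (i : Fin n) (f : O F p m n) : O F p m n := fun μ =>
  if i ∈ μ.2 then 0
  else ((-1 : F)) ^ (μ.2.filter fun j => j < i).card * f (μ.1, insert i μ.2)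

/-- The partial superderivation `∂_i`, `i ∈ I = {1,…,m+n}`. -/
def pd [NeZero p] (i : Fin (m + n)) (f : O F p m n) : O F p m n :=
  Sum.elim (fun j => dEv j f) (fun j => dOd j f) (finSumFinEquiv.symm i)

/-- The variable `x_i` as an element of `O(m,n)`. -/
def xVar [NeZero p] (i : Fin (m + n)) : O F p m n := fun μ =>
  if h : (i : ℕ) < m then
    (if μ.1 = Pi.single (⟨i, h⟩ : Fin m) 1 ∧ μ.2 = (∅ : Finset (Fin n)) then 1 else 0)
  else
    (if μ.1 = 0 ∧ μ.2 = {(⟨(i : ℕ) - m, by have := i.isLt; omega⟩ : Fin n)} then 1 else 0)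

/-- Projection of `f ∈ O(m,n)` onto its parity-`b` component. -/
def projO (b : ZMod 2) (f : O F p m n) : O F p m n :=
  fun μ => if parMon μ = b then f μ else 0

/-- Projection of `D ∈ W(m,n)` onto its parity-`b` component
(the parity of `f ∂_i` is `|f| + |∂_i|`). -/
def projW (b : ZMod 2) (D : W F p m n) : W F p m n :=
  fun i => projO (b + parIdx m i) (D i)

/-- `f` is `ℤ₂`-homogeneous of parity `b`. -/
def isParO (b : ZMod 2) (f : O F p m n) : Prop := ∀ μ, f μ ≠ 0 → parMon μ = b

/-- `D` is `ℤ₂`-homogeneous of parity `b`. -/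
def isParW (b : ZMod 2) (D : W F p m n) : Prop := ∀ i, isParO (b + parIdx m i) (D i)

/-- Action of a superderivation `D = ∑ f_i ∂_i` on `g ∈ O(m,n)`: `D(g) = ∑ f_i · ∂_i(g)`. -/
def act [NeZero p] (D : W F p m n) (g : O F p m n) : O F p m n :=
  ∑ i, mulO (D i) (pd i g)

/-- Super-commutator bracket on `W(m,n)`, extended bilinearly from homogeneous components:
`[D,E] = D∘E - (-1)^{|D||E|} E∘D`, recorded via values on the generators `x_k`. -/
def bracketW [NeZero p] (D E : W F p m n) : W F p m n :=
  ∑ a : ZMod 2, ∑ b : ZMod 2,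
    (fun k => act (projW a D) (projW b E k)
      - ((-1 : F)) ^ (a * b).val • act (projW b E) (projW a D k) : W F p m n)

/-- Divergence: `div(f ∂_i) = (-1)^{|f||∂_i|} ∂_i(f)`, extended linearly. -/
def divW [NeZero p] (D : W F p m n) : O F p m n :=
  ∑ i, ∑ b : ZMod 2, ((-1 : F)) ^ (b * parIdx m i).val • pd i (projO b (D i))

/-- The Euler (degree) derivation `𝔇 = ∑ x_k ∂_k`. -/
def euler (F : Type*) [Field F] (p m n : ℕ) [NeZero p] : W F p m n := fun i => xVar i

/-- The derivation `f𝔇 = ∑ (f·x_k) ∂_k`. -/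
def fEuler [NeZero p] (f : O F p m n) : W F p m n := fun i => mulO f (xVar i)

/-- `f` is `ℤ`-homogeneous of degree `s` (i.e. `f ∈ O_s`). -/
def inO (s : ℤ) (f : O F p m n) : Prop := ∀ μ, f μ ≠ 0 → (zdMon μ : ℤ) = s

/-- `D ∈ W_s` for the standard grading (`zd(f∂_i) = zd(f) - 1`). -/
def inW (s : ℤ) (D : W F p m n) : Prop := ∀ i, inO (s + 1) (D i)

/-- The superderivation `∂_i` as an element of `W(m,n)`. -/
def delOp (F : Type*) [Field F] (p m n : ℕ) [NeZero p] (i : Fin (m + n)) : W F p m n :=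
  fun k => if k = i then oneO F p m n else 0

/-- The `ℤ`-graded component `W_s` as a submodule. -/
def Wgrade (F : Type*) [Field F] (p m n : ℕ) (s : ℤ) : Submodule F (W F p m n) where
  carrier := {D | inW s D}
  add_mem' := by
    intro a b ha hb i μ h
    by_cases h1 : a i μ = 0
    · exact hb i μ (by simpa [h1] using h)
    · exact ha i μ h1
  zero_mem' := by intro i μ h; simp at h
  smul_mem' := by
    intro c a ha i μ h
    refine ha i μ (fun h1 => h ?_)
    simp [h1]

def Ograde (F : Type*) [Field F] (p m n : ℕ) (s : ℤ) : Submodule F (O F p m n) where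
  carrier := {f | inO s f}
  add_mem' {f g} hf hg μ h := by
    by_cases hfμ : f μ = 0
    · exact hg μ (by simpa [hfμ] using h)
    · exact hf μ hfμ
  zero_mem' _ h := absurd rfl h
  smul_mem' _ _ hf μ h := hf μ (right_ne_zero_of_mul h)

theorem card_filter_lt_add_card_filter_gt {α : Type*} [LinearOrder α] {s : Finset α} {a : α}
    (ha : a ∉ s) : #{x ∈ s | x < a} + #{x ∈ s | a < x} = #s := by
  have hgt : {x ∈ s | ¬x < a} = {x ∈ s | a < x} := filter_congr fun x hx =>
    ⟨fun h => lt_of_le_of_ne (not_lt.1 h) (ne_of_mem_of_not_mem hx ha).symm,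
      fun h => not_lt.2 h.le⟩
  rw [← hgt, card_filter_add_card_filter_not]

theorem val_single_one [Fact (1 < p)] (j i : Fin m) :
    ((Pi.single j (1 : Fin p) : Fin m → Fin p) i : ℕ) = (Pi.single j 1 : Fin m → ℕ) i := by
  rcases eq_or_ne i j with rfl | hij
  · simp [Nat.mod_eq_of_lt (Fact.out : 1 < p)]
  · simp [hij]

theorem xVar_castAdd [NeZero p] (j : Fin m) :
    xVar (F := F) (Fin.castAdd n j) = Pi.single ((Pi.single j 1, ∅) : Mon p m n) 1 := by
  funext κ
  simp only [xVar, Fin.val_castAdd, j.isLt, dif_pos, Pi.single_apply, Prod.ext_iff]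

theorem xVar_natAdd [NeZero p] (j : Fin n) :
    xVar (F := F) (Fin.natAdd m j) = Pi.single ((0, {j}) : Mon p m n) 1 := by
  funext κ
  simp [xVar, Pi.single_apply, Prod.ext_iff]

theorem pd_castAdd [NeZero p] (j : Fin m) (g : O F p m n) : pd (Fin.castAdd n j) g = dEv j g := by
  simp [pd]

theorem pd_natAdd [NeZero p] (j : Fin n) (g : O F p m n) : pd (Fin.natAdd m j) g = dOd j g := by
  simp [pd]

theorem zdMon_eq_add_of_split {μ ν κ : Mon p m n}
    (h₁ : ∀ i, (ν.1 i : ℕ) + (κ.1 i : ℕ) = (μ.1 i : ℕ)) (h₂ : ν.2 ∩ κ.2 = ∅)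
    (h₃ : ν.2 ∪ κ.2 = μ.2) : zdMon μ = zdMon ν + zdMon κ := by
  have hcard : #μ.2 = #ν.2 + #κ.2 := by
    rw [← h₃, card_union_of_disjoint (disjoint_iff_inter_eq_empty.2 h₂)]
  simp only [zdMon, hcard, ← h₁, sum_add_distrib]
  ring

theorem zdMon_update_add (μ : Mon p m n) (j : Fin m) (a : Fin p) :
    zdMon ((Function.update μ.1 j a, μ.2) : Mon p m n) + μ.1 j = zdMon μ + a := by
  have hval : ∀ i, ((Function.update μ.1 j a i : Fin p) : ℕ)
      = Function.update (fun i => (μ.1 i : ℕ)) j (a : ℕ) i := fun i =>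
    Function.apply_update (fun _ (x : Fin p) => (x : ℕ)) μ.1 j a i
  simp only [zdMon, hval, sum_update_of_mem (mem_univ j),
    ← add_sum_erase _ _ (mem_univ j), erase_eq]
  omega

theorem inO_mulO [NeZero p] {s t : ℤ} {f g : O F p m n} (hf : inO s f) (hg : inO t g) :
    inO (s + t) (mulO f g) := by
  intro μ h
  obtain ⟨ν, -, hν⟩ := exists_ne_zero_of_sum_ne_zero h
  obtain ⟨κ, -, hκ⟩ := exists_ne_zero_of_sum_ne_zero hν
  split_ifs at hκ with hsplit
  · obtain ⟨h₁, h₂, h₃⟩ := hsplit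
    rw [zdMon_eq_add_of_split h₁ h₂ h₃, Nat.cast_add,
      hf ν (right_ne_zero_of_mul (left_ne_zero_of_mul hκ)), hg κ (right_ne_zero_of_mul hκ)]
  · exact absurd rfl hκ

theorem inO_single (κ : Mon p m n) (c : F) : inO (zdMon κ) (Pi.single κ c : O F p m n) := by
  intro μ h
  by_cases hμ : μ = κ
  · rw [hμ]
  · simp [Pi.single_eq_of_ne hμ] at h

theorem inO_xVar [Fact (1 < p)] (i : Fin (m + n)) : inO 1 (xVar (F := F) (p := p) i) := by
  induction i using Fin.addCases with
  | left j =>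
    rw [xVar_castAdd]
    convert inO_single _ (1 : F)
    simp [zdMon, val_single_one]
  | right j =>
    rw [xVar_natAdd]
    convert inO_single _ (1 : F)
    simp [zdMon]

theorem fEuler_inW [Fact (1 < p)] {s : ℤ} {f : O F p m n} (hf : inO s f) : inW s (fEuler f) :=
  fun i => inO_mulO hf (inO_xVar i)

theorem inO_projO {s : ℤ} {g : O F p m n} (hg : inO s g) (b : ZMod 2) : inO s (projO b g) :=
  fun μ h => hg μ fun hμ => h (by simp [projO, hμ])

theorem inO_dEv [NeZero p] {s : ℤ} {g : O F p m n} (hg : inO (s + 1) g) (j : Fin m) :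
    inO s (dEv j g) := by
  intro μ h
  unfold dEv at h
  split_ifs at h with hlt
  · have hupdate := zdMon_update_add μ j ⟨_, hlt⟩
    have hdeg := hg _ h
    dsimp only at hupdate
    omega
  · exact absurd rfl h

theorem inO_dOd {s : ℤ} {g : O F p m n} (hg : inO (s + 1) g) (j : Fin n) : inO s (dOd j g) := by
  intro μ h
  unfold dOd at h
  split_ifs at h with hj
  · exact absurd rfl h
  · have hdeg := hg _ (right_ne_zero_of_mul h)
    simp only [zdMon, card_insert_of_notMem hj] at hdeg ⊢
    omega

theorem inO_pd [NeZero p] {s : ℤ} {g : O F p m n} (hg : inO (s + 1) g) (i : Fin (m + n)) :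
    inO s (pd i g) := by
  induction i using Fin.addCases with
  | left j => rw [pd_castAdd]; exact inO_dEv hg j
  | right j => rw [pd_natAdd]; exact inO_dOd hg j

theorem divW_inO [NeZero p] {s : ℤ} {D : W F p m n} (hD : inW s D) : inO s (divW D) :=
  Submodule.sum_mem (Ograde F p m n s) fun i _ => Submodule.sum_mem _ fun b _ =>
    Submodule.smul_mem _ _ (inO_pd (inO_projO (hD i) b) i)

theorem mulO_single_one_apply [NeZero p] (f : O F p m n) (κ μ : Mon p m n) :
    mulO f (Pi.single κ 1) μ = ∑ ν : Mon p m n,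
      if (∀ i, (ν.1 i : ℕ) + (κ.1 i : ℕ) = (μ.1 i : ℕ)) ∧ ν.2 ∩ κ.2 = ∅ ∧ ν.2 ∪ κ.2 = μ.2 then
        ((extSign ν.2 κ.2 : ℤ) : F) * (∏ i, (((μ.1 i : ℕ).choose (ν.1 i : ℕ) : ℕ) : F)) * f ν
      else 0 := by
  refine sum_congr rfl fun ν _ => ?_
  rw [Fintype.sum_eq_single κ fun κ' hκ' => by simp [Pi.single_eq_of_ne hκ']]
  simp

theorem mulO_xVar_castAdd_update [Fact (1 < p)] (f : O F p m n) (j : Fin m)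
    (α : Fin m → Fin p) (u : Finset (Fin n)) (a : Fin p) (ha : (a : ℕ) = α j + 1) :
    mulO f (xVar (Fin.castAdd n j)) (Function.update α j a, u) = (a : F) * f (α, u) := by
  have hsplit (ν : Mon p m n) :
      ((∀ i, (ν.1 i : ℕ) + ((Pi.single j 1 : Fin m → Fin p) i : ℕ)
          = (Function.update α j a i : ℕ)) ∧ ν.2 ∩ ∅ = ∅ ∧ ν.2 ∪ ∅ = u) ↔ ν = (α, u) := by
    have hfst : (∀ i, (ν.1 i : ℕ) + (Pi.single j 1 : Fin m → ℕ) i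
        = (Function.update α j a i : ℕ)) ↔ ν.1 = α := by
      rw [funext_iff]
      refine forall_congr' fun i => ?_
      rcases eq_or_ne i j with rfl | hij
      · simp [ha, Fin.ext_iff]
      · simp [hij, Fin.ext_iff]
    simp [val_single_one, hfst, Prod.ext_iff]
  have hchoose : ∏ i, (((Function.update α j a i : ℕ).choose (α i : ℕ) : ℕ) : F) = a := by
    rw [Fintype.prod_eq_single j fun i hij => by simp [hij]]
    simp [ha]
  rw [xVar_castAdd, mulO_single_one_apply]
  simp only [hsplit, Fintype.sum_ite_eq', extSign, sum_empty, pow_zero, Int.cast_one, one_mul]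
  rw [hchoose]

theorem mulO_xVar_natAdd_insert [NeZero p] (f : O F p m n) (j : Fin n) (α : Fin m → Fin p)
    {u : Finset (Fin n)} (hj : j ∉ u) :
    mulO f (xVar (Fin.natAdd m j)) (α, insert j u) = (-1 : F) ^ #{k ∈ u | j < k} * f (α, u) := by
  have hsplit (ν : Mon p m n) :
      ((∀ i, (ν.1 i : ℕ) + ((0 : Fin m → Fin p) i : ℕ) = (α i : ℕ)) ∧ ν.2 ∩ {j} = ∅ ∧
        ν.2 ∪ {j} = insert j u) ↔ ν = (α, u) := by
    have hsnd : (ν.2 ∩ {j} = ∅ ∧ ν.2 ∪ {j} = insert j u) ↔ ν.2 = u := by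
      constructor
      · rintro ⟨hdisj, hunion⟩
        have hjν : j ∉ ν.2 := fun hjν => by simpa [hjν] using congrArg (j ∈ ·) hdisj
        rw [union_singleton] at hunion
        rw [← erase_insert hjν, hunion, erase_insert hj]
      · intro h
        simp [h, hj]
    rw [and_congr_right' hsnd]
    simp [Prod.ext_iff, funext_iff, Fin.ext_iff]
  rw [xVar_natAdd, mulO_single_one_apply]
  simp only [hsplit, Fintype.sum_ite_eq']
  simp [extSign]

theorem dEv_mulO_xVar [Fact (1 < p)] [CharP F p] (f : O F p m n) (j : Fin m) (μ : Mon p m n) :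
    dEv j (mulO f (xVar (Fin.castAdd n j))) μ = ((μ.1 j + 1 : ℕ) : F) * f μ := by
  unfold dEv
  split_ifs with h
  · exact mulO_xVar_castAdd_update f j μ.1 μ.2 _ rfl
  · rw [show (μ.1 j : ℕ) + 1 = p by have := (μ.1 j).isLt; omega, CharP.cast_eq_zero, zero_mul]

theorem dOd_mulO_xVar [NeZero p] (f : O F p m n) (j : Fin n) (μ : Mon p m n) :
    dOd j (mulO f (xVar (Fin.natAdd m j))) μ =
      if j ∈ μ.2 then 0 else (-1 : F) ^ #μ.2 * f μ := by
  unfold dOd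
  split_ifs with hj
  · rfl
  · rw [mulO_xVar_natAdd_insert f j μ.1 hj, ← mul_assoc, ← pow_add,
      card_filter_lt_add_card_filter_gt hj]

theorem sum_dEv_projO [NeZero p] (j : Fin m) (g : O F p m n) (μ : Mon p m n) :
    ∑ b : ZMod 2, dEv j (projO b g) μ = dEv j g μ := by
  unfold dEv
  split_ifs
  · simp [projO]
  · simp

theorem sum_neg_one_pow_mul_dOd_projO (j : Fin n) (g : O F p m n) (μ : Mon p m n) :
    ∑ b : ZMod 2, (-1 : F) ^ b.val * dOd j (projO b g) μ = (-1) ^ (#μ.2 + 1) * dOd j g μ := by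
  unfold dOd
  split_ifs with hj
  · simp
  · have hpar : parMon ((μ.1, insert j μ.2) : Mon p m n) = ((#μ.2 + 1 : ℕ) : ZMod 2) := by
      simp [parMon, card_insert_of_notMem hj]
    simp only [projO, hpar, mul_ite, mul_zero, Fintype.sum_ite_eq, ZMod.val_natCast,
      ← neg_one_pow_eq_pow_mod_two]

theorem divW_apply [NeZero p] (D : W F p m n) (μ : Mon p m n) :
    divW D μ = ∑ j, dEv j (D (Fin.castAdd n j)) μ
      + ∑ j, (-1 : F) ^ (#μ.2 + 1) * dOd j (D (Fin.natAdd m j)) μ := by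
  simp only [divW, Finset.sum_apply, Pi.smul_apply, smul_eq_mul, Fin.sum_univ_add]
  congr 1 <;> refine sum_congr rfl fun j _ => ?_
  · simp [parIdx, pd_castAdd, sum_dEv_projO]
  · simp [parIdx, pd_natAdd, sum_neg_one_pow_mul_dOd_projO]

theorem divW_fEuler_apply [Fact (1 < p)] [CharP F p] (f : O F p m n) (μ : Mon p m n) :
    divW (fEuler f) μ = (((m : ℤ) - n + zdMon μ : ℤ) : F) * f μ := by
  have hodd (j : Fin n) : (-1 : F) ^ (#μ.2 + 1) * (if j ∈ μ.2 then 0 else (-1) ^ #μ.2 * f μ)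
      = (if j ∈ μ.2 then 1 else 0) * f μ - f μ := by
    split_ifs
    · simp
    · rw [← mul_assoc, ← pow_add, Odd.neg_one_pow ⟨#μ.2, by ring⟩]
      ring
  simp only [divW_apply, fEuler, dEv_mulO_xVar, dOd_mulO_xVar, hodd, ← sum_mul, sum_sub_distrib,
    sum_boole, filter_mem_eq_inter, univ_inter]
  push_cast [zdMon]
  simp only [sum_add_distrib, sum_const, card_univ, Fintype.card_fin, nsmul_eq_mul, mul_one]
  ring

theorem divW_fEuler_of_inO [Fact (1 < p)] [CharP F p] {s : ℤ} {f : O F p m n} (hf : inO s f) :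
    divW (fEuler f) = (((m : ℤ) - n + s : ℤ) : F) • f := by
  funext μ
  rw [divW_fEuler_apply, Pi.smul_apply, smul_eq_mul]
  by_cases hμ : f μ = 0
  · simp [hμ]
  · rw [hf μ hμ]

theorem divW_sub [NeZero p] (D E : W F p m n) : divW (D - E) = divW D - divW E := by
  have hproj (b : ZMod 2) (f g : O F p m n) : projO b (f - g) = projO b f - projO b g := by
    funext μ
    simp only [projO, Pi.sub_apply]
    split_ifs <;> simp
  have hpd (i : Fin (m + n)) (f g : O F p m n) : pd i (f - g) = pd i f - pd i g := by
    funext μ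
    induction i using Fin.addCases with
    | left j => simp only [pd_castAdd, dEv, Pi.sub_apply]; split_ifs <;> simp
    | right j => simp only [pd_natAdd, dOd, Pi.sub_apply]; split_ifs <;> simp [mul_sub]
  simp only [divW, Pi.sub_apply, hproj, hpd, smul_sub, sum_sub_distrib]

theorem fEuler_zero [NeZero p] : fEuler (0 : O F p m n) = 0 := by
  funext i μ
  simp [fEuler, mulO]

theorem Wprime_decomposition_general (F : Type*) [Field F] (p m n : ℕ) [Fact p.Prime] [CharP F p]
    (s : ℤ) :
    ( ((m : ℤ) - (n : ℤ) + s) % (p : ℤ) ≠ 0 →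
      (∀ D : W F p m n, inW s D →
        ∃ (D' : W F p m n) (f : O F p m n),
          inW s D' ∧ divW D' = 0 ∧ inO s f ∧ D = D' + fEuler f) ∧
      (∀ D₀ : W F p m n, inW s D₀ → divW D₀ = 0 →
        ∀ f : O F p m n, inO s f → D₀ = fEuler f → D₀ = 0) ) ∧
    ( ((m : ℤ) - (n : ℤ) + s) % (p : ℤ) = 0 →
      ∀ f : O F p m n, inO s f → divW (fEuler f) = 0 ) := by
  have hc : (((m : ℤ) - n + s : ℤ) : F) = 0 ↔ ((m : ℤ) - n + s) % p = 0 := by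
    rw [CharP.intCast_eq_zero_iff F p, Int.dvd_iff_emod_eq_zero]
  refine ⟨fun hs => ⟨fun D hD => ?_, fun D₀ _ hdiv f hf hD₀ => ?_⟩, fun hs f hf => ?_⟩
  · set g := (((m : ℤ) - n + s : ℤ) : F)⁻¹ • divW D
    have hg : inO s g := (Ograde F p m n s).smul_mem _ (divW_inO hD)
    refine ⟨D - fEuler g, g, (Wgrade F p m n s).sub_mem hD (fEuler_inW hg), ?_, hg,
      (sub_add_cancel _ _).symm⟩
    rw [divW_sub, divW_fEuler_of_inO hg, smul_inv_smul₀ (mt hc.1 hs), sub_self]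
  · have hf0 : f = 0 := by
      rw [hD₀, divW_fEuler_of_inO hf] at hdiv
      exact (smul_eq_zero.1 hdiv).resolve_left (mt hc.1 hs)
    rw [hD₀, hf0, fEuler_zero]
  · rw [divW_fEuler_of_inO hf, hc.2 hs, zero_smul]

/-- with `W_s' = {D ∈ W_s : div D = 0}` and `W_s'' = {f𝔇 : f ∈ O_s}`:
if `m - n + s ≢ 0 (mod p)` then `W_s = W_s' ⊕ W_s''` (existence of a decomposition and
zero intersection), while if `m - n + s ≡ 0 (mod p)` then `W_s'' ⊆ W_s'`. -/
theorem Wprime_decomposition (F : Type*) [Field F] (p m n : ℕ) [Fact p.Prime] [CharP F p]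
    (hp : 3 < p) (s : ℤ) :
    ( ((m : ℤ) - (n : ℤ) + s) % (p : ℤ) ≠ 0 →
      (∀ D : W F p m n, inW s D →
        ∃ (D' : W F p m n) (f : O F p m n),
          inW s D' ∧ divW D' = 0 ∧ inO s f ∧ D = D' + fEuler f) ∧
      (∀ D₀ : W F p m n, inW s D₀ → divW D₀ = 0 →
        ∀ f : O F p m n, inO s f → D₀ = fEuler f → D₀ = 0) ) ∧
    ( ((m : ℤ) - (n : ℤ) + s) % (p : ℤ) = 0 →
      ∀ f : O F p m n, inO s f → divW (fEuler f) = 0 ) :=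
  Wprime_decomposition_general F p m n s

end Cartan
end

section
/- The null component S(m,n)_0 of the special Lie superalgebra is isomorphic, as a Lie superalgebra, to sl(m,n), the subalgebra of gl(m,n) consisting of matrices of supertrace zero. -/
/-!
A degree-zero derivation is `∑ j k, X j k • x_j ∂_k`, so reading off the coefficients of the
degree-one monomials identifies `W(m,n)₀` with `gl(m,n)`. Since `∂_i x_j = δ_ij`, a degree-zero
derivation sends `x_j` to its `j`-th coefficient column; hence composing two of them multiplies
their matrices and the superbracket becomes the supercommutator. The divergence of
`∑ X j k • x_j ∂_k` is `∑ i, (-1)^{|i|} X i i`, the supertrace, so `S(m,n)₀` corresponds exactly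
to `sl(m,n)`.
-/

open Finset

namespace Cartan

variable {F : Type*} [Field F] {p m n : ℕ}

/-- Projection of a matrix onto its parity-`a` part (entry `(i,j)` has parity
`|i| + |j|` for the `gl(m,n)` block grading). -/
def projM (F : Type*) [Field F] (m : ℕ) {k : ℕ} (a : ZMod 2)
    (X : Matrix (Fin k) (Fin k) F) : Matrix (Fin k) (Fin k) F :=
  fun i j => if parIdx m i + parIdx m j = a then X i j else 0

/-- Super-commutator on `gl(m,n)`, extended bilinearly from homogeneous parts. -/
def superComm (F : Type*) [Field F] (m : ℕ) {k : ℕ}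
    (X Y : Matrix (Fin k) (Fin k) F) : Matrix (Fin k) (Fin k) F :=
  ∑ a : ZMod 2, ∑ b : ZMod 2,
    (projM F m a X * projM F m b Y
      - ((-1 : F)) ^ (a * b).val • (projM F m b Y * projM F m a X))

/-- Supertrace of a matrix for the `gl(m,n)` block grading. -/
def strM (F : Type*) [Field F] (m : ℕ) {k : ℕ} (X : Matrix (Fin k) (Fin k) F) : F :=
  ∑ i : Fin k, (if (i : ℕ) < m then X i i else - X i i)

/-- `sl(m,n)`: matrices of supertrace zero, as a submodule of `gl(m,n)`. -/
def slSub (F : Type*) [Field F] (m n : ℕ) :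
    Submodule F (Matrix (Fin (m + n)) (Fin (m + n)) F) where
  carrier := {X | strM F m X = 0}
  add_mem' := by
    intro X Y hX hY
    have h : strM F m (X + Y) = strM F m X + strM F m Y := by
      simp only [strM, Matrix.add_apply, ← Finset.sum_add_distrib]
      exact Finset.sum_congr rfl fun i _ => by split <;> ring
    simp only [Set.mem_setOf_eq] at *
    rw [h, hX, hY, add_zero]
  zero_mem' := by simp [strM]
  smul_mem' := by
    intro c X hX
    have h : strM F m (c • X) = c * strM F m X := by
      simp only [strM, Matrix.smul_apply, smul_eq_mul, Finset.mul_sum]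
      exact Finset.sum_congr rfl fun i _ => by split <;> ring
    simp only [Set.mem_setOf_eq] at *
    rw [h, hX, mul_zero]


lemma projO_add (b : ZMod 2) (f g : O F p m n) :
    projO b (f + g) = projO b f + projO b g := by
  funext μ; simp only [projO, Pi.add_apply]; split <;> simp

lemma projO_smul (b : ZMod 2) (c : F) (f : O F p m n) :
    projO b (c • f) = c • projO b f := by
  funext μ; simp only [projO, Pi.smul_apply, smul_eq_mul]; split <;> simp

lemma dEv_add [NeZero p] (i : Fin m) (f g : O F p m n) :
    dEv i (f + g) = dEv i f + dEv i g := by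
  funext μ; simp only [dEv, Pi.add_apply]; split <;> simp

lemma dOd_add (i : Fin n) (f g : O F p m n) :
    dOd i (f + g) = dOd i f + dOd i g := by
  funext μ; simp only [dOd, Pi.add_apply]; split
  · simp
  · ring

lemma dEv_smul [NeZero p] (i : Fin m) (c : F) (f : O F p m n) :
    dEv i (c • f) = c • dEv i f := by
  funext μ; simp only [dEv, Pi.smul_apply, smul_eq_mul]; split <;> simp

lemma dOd_smul (i : Fin n) (c : F) (f : O F p m n) :
    dOd i (c • f) = c • dOd i f := by
  funext μ; simp only [dOd, Pi.smul_apply, smul_eq_mul]; split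
  · simp
  · ring

lemma pd_add [NeZero p] (i : Fin (m + n)) (f g : O F p m n) :
    pd i (f + g) = pd i f + pd i g := by
  unfold pd
  cases finSumFinEquiv.symm i with
  | inl j => exact dEv_add j f g
  | inr j => exact dOd_add j f g

lemma pd_smul [NeZero p] (i : Fin (m + n)) (c : F) (f : O F p m n) :
    pd i (c • f) = c • pd i f := by
  unfold pd
  cases finSumFinEquiv.symm i with
  | inl j => exact dEv_smul j c f
  | inr j => exact dOd_smul j c f

lemma divW_add [NeZero p] (D E : W F p m n) :
    divW (D + E) = divW D + divW E := by
  unfold divW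
  rw [← Finset.sum_add_distrib]
  refine Finset.sum_congr rfl fun i _ => ?_
  rw [← Finset.sum_add_distrib]
  refine Finset.sum_congr rfl fun b _ => ?_
  rw [show (D + E) i = D i + E i from rfl, projO_add, pd_add, smul_add]

lemma divW_smul [NeZero p] (c : F) (D : W F p m n) :
    divW (c • D) = c • divW D := by
  unfold divW
  rw [Finset.smul_sum]
  refine Finset.sum_congr rfl fun i _ => ?_
  rw [Finset.smul_sum]
  refine Finset.sum_congr rfl fun b _ => ?_
  rw [show (c • D) i = c • D i from rfl, projO_smul, pd_smul, smul_comm]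

lemma divW_zero [NeZero p] : divW (0 : W F p m n) = 0 := by
  have := divW_smul (0 : F) (0 : W F p m n)
  simpa using this

/-- `S(m,n)₀`: the null component of the special superalgebra, realized as the
divergence-free part of `W₀`. -/
def S0 (F : Type*) [Field F] (p m n : ℕ) [Fact p.Prime] : Submodule F (W F p m n) where
  carrier := {D | inW 0 D ∧ divW D = 0}
  add_mem' := by
    intro a b ha hb
    refine ⟨(Wgrade F p m n 0).add_mem ha.1 hb.1, ?_⟩
    rw [divW_add, ha.2, hb.2, add_zero]
  zero_mem' := by
    exact ⟨(Wgrade F p m n 0).zero_mem, divW_zero⟩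
  smul_mem' := by
    intro c a ha
    refine ⟨(Wgrade F p m n 0).smul_mem c ha.1, ?_⟩
    rw [divW_smul, ha.2, smul_zero]

lemma _root_.Fintype.sum_eq_one_iff_eq_single {ι : Type*} [Fintype ι] [DecidableEq ι]
    (f : ι → ℕ) : ∑ i, f i = 1 ↔ ∃ i, f = Pi.single i 1 := by
  have := Finsupp.sum_eq_one_iff (Finsupp.equivFunOnFinite.symm f)
  rw [Finsupp.sum_fintype _ _ (fun _ => rfl)] at this
  simpa [← Finsupp.equivFunOnFinite_symm_single, Equiv.apply_eq_iff_eq] using this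

@[simp] lemma _root_.Fin.castAdd_ne_natAdd {m n : ℕ} (i : Fin m) (k : Fin n) :
    Fin.castAdd n i ≠ Fin.natAdd m k := fun h => by
  have := congrArg Fin.val h
  simp only [Fin.val_castAdd, Fin.val_natAdd] at this
  omega

lemma _root_.Finset.insert_eq_singleton_iff_of_notMem {α : Type*} [DecidableEq α] {i k : α}
    {s : Finset α} (h : i ∉ s) : insert i s = {k} ↔ i = k ∧ s = ∅ := by
  constructor
  · intro he
    have hmem : ∀ x, x = i ∨ x ∈ s ↔ x = k := by simpa [Finset.ext_iff] using he
    obtain rfl : i = k := (hmem i).mp (Or.inl rfl)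
    exact ⟨rfl, Finset.eq_empty_of_forall_notMem fun x hx => h ((hmem x).mp (Or.inr hx) ▸ hx)⟩
  · rintro ⟨rfl, rfl⟩
    rfl

lemma projO_sum {ι : Type*} (b : ZMod 2) (s : Finset ι) (f : ι → O F p m n) :
    projO b (∑ j ∈ s, f j) = ∑ j ∈ s, projO b (f j) :=
  map_sum (AddMonoidHom.mk' (projO b) (projO_add b)) f s

section NeZero

variable [NeZero p]

lemma pd_sum {ι : Type*} (i : Fin (m + n)) (s : Finset ι) (f : ι → O F p m n) :
    pd i (∑ j ∈ s, f j) = ∑ j ∈ s, pd i (f j) :=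
  map_sum (AddMonoidHom.mk' (pd i) (pd_add i)) f s

lemma mulO_smul_right (f : O F p m n) (c : F) (g : O F p m n) :
    mulO f (c • g) = c • mulO f g := by
  funext μ
  simp only [mulO, Pi.smul_apply, smul_eq_mul, Finset.mul_sum]
  refine Finset.sum_congr rfl fun ν _ => Finset.sum_congr rfl fun κ _ => ?_
  split_ifs <;> ring

end NeZero

section LinearVectorFields

variable [Fact (1 < p)]

@[simp] lemma ne_one_of_one_lt : p ≠ 1 :=
  (Fact.out : 1 < p).ne'

@[simp] lemma one_mod_of_one_lt : 1 % p = 1 :=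
  Nat.one_mod_eq_one.mpr ne_one_of_one_lt

def monOf (j : Fin (m + n)) : Mon p m n :=
  Fin.addCases (fun i => (Pi.single i 1, ∅)) (fun i => (0, {i})) j

@[simp] lemma monOf_castAdd (i : Fin m) :
    (monOf (Fin.castAdd n i) : Mon p m n) = (Pi.single i 1, ∅) :=
  Fin.addCases_left i

@[simp] lemma monOf_natAdd (i : Fin n) : (monOf (Fin.natAdd m i) : Mon p m n) = (0, {i}) :=
  Fin.addCases_right i

lemma monOf_injective : Function.Injective (monOf : Fin (m + n) → Mon p m n) := by
  intro j l h
  induction j using Fin.addCases <;> induction l using Fin.addCases <;> simp_all [Prod.ext_iff]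
  rename_i i k
  by_contra hne
  simpa [hne] using congrFun h i

lemma parMon_monOf (j : Fin (m + n)) : parMon (monOf j : Mon p m n) = parIdx m j := by
  induction j using Fin.addCases <;> simp [parMon, parIdx]

lemma val_eq_single_iff {i : Fin m} {α : Fin m → Fin p} :
    (fun k => (α k : ℕ)) = Pi.single i 1 ↔ α = Pi.single i 1 := by
  simp only [funext_iff, Fin.ext_iff, Pi.single_apply]
  refine forall_congr' fun k => ?_
  split_ifs <;> simp

lemma zdMon_eq_one_iff (μ : Mon p m n) : zdMon μ = 1 ↔ ∃ j, μ = monOf j := by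
  constructor
  · intro h
    rcases Nat.add_eq_one_iff.mp h with ⟨hα, hs⟩ | ⟨hα, hs⟩
    · obtain ⟨a, ha⟩ := Finset.card_eq_one.mp hs
      refine ⟨Fin.natAdd m a, Prod.ext (funext fun k => Fin.ext ?_) (by simpa using ha)⟩
      simpa using Finset.sum_eq_zero_iff.mp hα k (Finset.mem_univ k)
    · obtain ⟨i, hi⟩ := (Fintype.sum_eq_one_iff_eq_single _).mp hα
      exact ⟨Fin.castAdd n i, Prod.ext (by simpa [val_eq_single_iff] using hi)
        (by simpa using hs)⟩
  · rintro ⟨j, rfl⟩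
    induction j using Fin.addCases <;> simp [zdMon, Pi.single_apply, apply_ite Fin.val]

lemma xVar_apply (j : Fin (m + n)) (μ : Mon p m n) :
    (xVar j : O F p m n) μ = if μ = monOf j then 1 else 0 := by
  induction j using Fin.addCases <;> simp [xVar, Prod.ext_iff]

lemma oneO_apply (μ : Mon p m n) : oneO F p m n μ = if μ = (0, ∅) then 1 else 0 := by
  simp [oneO, Prod.ext_iff]

lemma oneO_ne_zero : oneO F p m n ≠ 0 :=
  fun h => by simpa [oneO_apply] using congrFun h (0, ∅)

lemma update_succ_eq_single_iff {α : Fin m → Fin p} {i k : Fin m} (h : (α i : ℕ) + 1 < p) :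
    Function.update α i ⟨α i + 1, h⟩ = Pi.single k 1 ↔ i = k ∧ α = 0 := by
  constructor
  · intro hu
    have hi := congrArg Fin.val (congrFun hu i)
    rw [Function.update_self] at hi
    obtain rfl : i = k := by
      by_contra hik
      simp [Pi.single_eq_of_ne hik] at hi
    refine ⟨rfl, funext fun x => ?_⟩
    by_cases hx : x = i
    · subst hx
      exact Fin.ext (by simpa using hi)
    · simpa [Function.update_of_ne hx, Pi.single_eq_of_ne hx] using congrFun hu x
  · rintro ⟨rfl, rfl⟩
    funext x
    by_cases hx : x = i
    · subst hx
      exact Fin.ext (by simp)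
    · simp [Function.update_of_ne hx, Pi.single_eq_of_ne hx]

lemma update_succ_ne_zero {α : Fin m → Fin p} {i : Fin m} (h : (α i : ℕ) + 1 < p) :
    Function.update α i ⟨α i + 1, h⟩ ≠ 0 := fun h0 => by
  simpa using congrArg Fin.val (congrFun h0 i)

lemma dEv_xVar (i : Fin m) (j : Fin (m + n)) :
    dEv i (xVar j : O F p m n) = if Fin.castAdd n i = j then oneO F p m n else 0 := by
  funext μ
  obtain ⟨α, s⟩ := μ
  induction j using Fin.addCases with
  | left k =>
    by_cases h : (α i : ℕ) + 1 < p
    · simp only [dEv, dif_pos h, xVar_apply, monOf_castAdd, Prod.mk.injEq,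
        update_succ_eq_single_iff h]
      split_ifs <;> simp_all [oneO_apply]
    · have hα : α ≠ 0 := by
        rintro rfl
        exact h (by simpa using (Fact.out : 1 < p))
      split_ifs <;> simp [dEv, h, oneO_apply, hα]
  | right k => simp [dEv, xVar_apply, update_succ_ne_zero]

lemma dOd_xVar (i : Fin n) (j : Fin (m + n)) :
    dOd i (xVar j : O F p m n) = if Fin.natAdd m i = j then oneO F p m n else 0 := by
  funext μ
  obtain ⟨α, s⟩ := μ
  induction j using Fin.addCases with
  | left k => simp [dOd, xVar_apply, (Fin.castAdd_ne_natAdd k i).symm]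
  | right k =>
    by_cases hi : i ∈ s
    · have : s ≠ ∅ := Finset.ne_empty_of_mem hi
      split_ifs <;> simp [dOd, hi, oneO_apply, this]
    · simp only [dOd, if_neg hi, xVar_apply, monOf_natAdd, Prod.mk.injEq,
        Finset.insert_eq_singleton_iff_of_notMem hi]
      split_ifs <;> simp_all [oneO_apply]

lemma pd_xVar (i j : Fin (m + n)) :
    pd i (xVar j : O F p m n) = if i = j then oneO F p m n else 0 := by
  induction i using Fin.addCases <;> simp [pd, dEv_xVar, dOd_xVar]

lemma projO_xVar (b : ZMod 2) (j : Fin (m + n)) :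
    projO b (xVar j : O F p m n) = if parIdx m j = b then xVar j else 0 := by
  funext μ
  by_cases hμ : μ = monOf j
  · subst hμ
    split_ifs <;> simp_all [projO, parMon_monOf]
  · split_ifs <;> simp [projO, xVar_apply, hμ]

lemma mulO_oneO (f : O F p m n) : mulO f (oneO F p m n) = f := by
  funext μ
  rw [mulO, Finset.sum_comm, Fintype.sum_eq_single (0, ∅) fun κ hκ => by simp [oneO_apply, hκ]]
  have hcond : ∀ ν : Mon p m n, ((∀ i, (ν.1 i : ℕ) = μ.1 i) ∧ ν.2 = μ.2) ↔ ν = μ := fun ν => by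
    simp [Prod.ext_iff, funext_iff, Fin.val_inj]
  simp [hcond, oneO_apply, extSign]

/-- `X` corresponds to `∑ j k, X j k • x_j ∂_k`: rows index variables and columns index
derivations, which makes composition of derivations the matrix product `A * B`. -/
def ofMatrix : Matrix (Fin (m + n)) (Fin (m + n)) F →ₗ[F] W F p m n where
  toFun X k := ∑ j, X j k • xVar j
  map_add' X Y := by
    funext k
    simp [add_smul, Finset.sum_add_distrib]
  map_smul' c X := by
    funext k
    simp [smul_smul, Finset.smul_sum]

def toMatrix : W F p m n →ₗ[F] Matrix (Fin (m + n)) (Fin (m + n)) F where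
  toFun D := Matrix.of fun j k => D k (monOf j)
  map_add' _ _ := rfl
  map_smul' _ _ := rfl

lemma ofMatrix_apply (X : Matrix (Fin (m + n)) (Fin (m + n)) F) (k : Fin (m + n)) :
    (ofMatrix X : W F p m n) k = ∑ j, X j k • xVar j :=
  rfl

@[simp] lemma toMatrix_apply (D : W F p m n) (j k : Fin (m + n)) :
    toMatrix D j k = D k (monOf j) :=
  rfl

lemma ofMatrix_apply_monOf (X : Matrix (Fin (m + n)) (Fin (m + n)) F) (k l : Fin (m + n)) :
    (ofMatrix X : W F p m n) k (monOf l) = X l k := by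
  simp [ofMatrix_apply, xVar_apply, monOf_injective.eq_iff]

lemma ofMatrix_apply_eq_zero {μ : Mon p m n} (hμ : ∀ j, μ ≠ monOf j)
    (X : Matrix (Fin (m + n)) (Fin (m + n)) F) (k : Fin (m + n)) :
    (ofMatrix X : W F p m n) k μ = 0 := by
  simp [ofMatrix_apply, xVar_apply, hμ]

lemma inW_ofMatrix (X : Matrix (Fin (m + n)) (Fin (m + n)) F) :
    inW 0 (ofMatrix X : W F p m n) := by
  intro k μ hμ
  have : zdMon μ = 1 := (zdMon_eq_one_iff μ).mpr <| by
    by_contra! h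
    exact hμ (ofMatrix_apply_eq_zero h X k)
  simp [this]

lemma toMatrix_ofMatrix (X : Matrix (Fin (m + n)) (Fin (m + n)) F) :
    toMatrix (ofMatrix X : W F p m n) = X := by
  ext l k
  simp [ofMatrix_apply_monOf]

lemma ofMatrix_toMatrix {D : W F p m n} (hD : inW 0 D) : ofMatrix (toMatrix D) = D := by
  funext k μ
  by_cases hμ : ∃ j, μ = monOf j
  · obtain ⟨j, rfl⟩ := hμ
    simp [ofMatrix_apply_monOf]
  · rw [ofMatrix_apply_eq_zero (not_exists.mp hμ)]
    by_contra h
    exact hμ ((zdMon_eq_one_iff μ).mp (by exact_mod_cast hD k μ (Ne.symm h)))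

lemma pd_ofMatrix (Y : Matrix (Fin (m + n)) (Fin (m + n)) F) (i k : Fin (m + n)) :
    pd i ((ofMatrix Y : W F p m n) k) = Y i k • oneO F p m n := by
  simp [ofMatrix_apply, pd_sum, pd_smul, pd_xVar]

lemma act_ofMatrix (D : W F p m n) (B : Matrix (Fin (m + n)) (Fin (m + n)) F)
    (k : Fin (m + n)) : act D ((ofMatrix B : W F p m n) k) = ∑ i, B i k • D i := by
  simp [act, pd_ofMatrix, mulO_smul_right, mulO_oneO]

lemma act_ofMatrix_ofMatrix (A B : Matrix (Fin (m + n)) (Fin (m + n)) F) (k : Fin (m + n)) :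
    act (ofMatrix A : W F p m n) ((ofMatrix B : W F p m n) k)
      = (ofMatrix (A * B) : W F p m n) k := by
  rw [act_ofMatrix]
  simp only [ofMatrix_apply, Matrix.mul_apply, Finset.smul_sum, Finset.sum_smul, smul_smul]
  rw [Finset.sum_comm]
  simp only [mul_comm]

lemma projO_ofMatrix (b : ZMod 2) (X : Matrix (Fin (m + n)) (Fin (m + n)) F) (k : Fin (m + n)) :
    projO b ((ofMatrix X : W F p m n) k)
      = (ofMatrix (Matrix.of fun j k => if parIdx m j = b then X j k else 0) : W F p m n) k := by
  simp only [ofMatrix_apply, projO_sum, projO_smul, projO_xVar, Matrix.of_apply]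
  refine Finset.sum_congr rfl fun j _ => ?_
  split_ifs <;> simp

lemma projW_ofMatrix (a : ZMod 2) (X : Matrix (Fin (m + n)) (Fin (m + n)) F) :
    projW a (ofMatrix X : W F p m n) = ofMatrix (projM F m a X) := by
  funext k
  rw [projW, projO_ofMatrix, ofMatrix_apply, ofMatrix_apply]
  simp only [Matrix.of_apply, projM, ← eq_sub_iff_add_eq, CharTwo.sub_eq_add]

lemma divW_ofMatrix (X : Matrix (Fin (m + n)) (Fin (m + n)) F) :
    divW (ofMatrix X : W F p m n) = strM F m X • oneO F p m n := by
  simp only [divW, projO_ofMatrix, pd_ofMatrix, Matrix.of_apply, smul_smul, ← Finset.sum_smul]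
  congr 1
  refine Finset.sum_congr rfl fun i _ => ?_
  simp only [mul_ite, mul_zero, Finset.sum_ite_eq, Finset.mem_univ, if_true]
  unfold parIdx
  split_ifs <;> simp [ZMod.val_one]

lemma bracketW_ofMatrix (X Y : Matrix (Fin (m + n)) (Fin (m + n)) F) :
    bracketW (ofMatrix X : W F p m n) (ofMatrix Y) = ofMatrix (superComm F m X Y) := by
  funext k
  simp [bracketW, superComm, projW_ofMatrix, act_ofMatrix_ofMatrix]

lemma toMatrix_bracketW {D E : W F p m n} (hD : inW 0 D) (hE : inW 0 E) :
    toMatrix (bracketW D E) = superComm F m (toMatrix D) (toMatrix E) := by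
  conv_lhs => rw [← ofMatrix_toMatrix hD, ← ofMatrix_toMatrix hE]
  rw [bracketW_ofMatrix, toMatrix_ofMatrix]

end LinearVectorFields

section S0

variable [Fact p.Prime]

lemma ofMatrix_mem_S0_iff (X : Matrix (Fin (m + n)) (Fin (m + n)) F) :
    (ofMatrix X : W F p m n) ∈ S0 F p m n ↔ X ∈ slSub F m n := by
  change inW 0 _ ∧ divW _ = 0 ↔ strM F m X = 0
  simp [inW_ofMatrix, divW_ofMatrix, oneO_ne_zero]

lemma toMatrix_mem_slSub {D : W F p m n} (hD : D ∈ S0 F p m n) : toMatrix D ∈ slSub F m n :=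
  (ofMatrix_mem_S0_iff _).mp (by rwa [ofMatrix_toMatrix hD.1])

def s0EquivSl : S0 F p m n ≃ₗ[F] slSub F m n where
  toFun D := ⟨toMatrix (D : W F p m n), toMatrix_mem_slSub D.2⟩
  map_add' _ _ := rfl
  map_smul' _ _ := rfl
  invFun X := ⟨ofMatrix X.1, (ofMatrix_mem_S0_iff X.1).mpr X.2⟩
  left_inv D := Subtype.ext (ofMatrix_toMatrix D.2.1)
  right_inv X := Subtype.ext (toMatrix_ofMatrix (p := p) X.1)

lemma s0EquivSl_apply (D : S0 F p m n) :
    (s0EquivSl D : Matrix (Fin (m + n)) (Fin (m + n)) F) = toMatrix (D : W F p m n) :=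
  rfl

end S0

theorem S0_iso_sl_general (F : Type*) [Field F] (p m n : ℕ) [Fact p.Prime] :
    ∃ e : (S0 F p m n) ≃ₗ[F] (slSub F m n),
      ∀ D E B : S0 F p m n,
        (B : W F p m n) = bracketW (D : W F p m n) (E : W F p m n) →
        (e B : Matrix (Fin (m + n)) (Fin (m + n)) F) = superComm F m (e D) (e E) :=
  ⟨s0EquivSl, fun D E B hB => by
    rw [s0EquivSl_apply, s0EquivSl_apply, s0EquivSl_apply, hB]
    exact toMatrix_bracketW D.2.1 E.2.1⟩

/-- `S(m,n)₀ ≅ sl(m,n)` as Lie superalgebras. -/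
theorem S0_iso_sl (F : Type*) [Field F] (p m n : ℕ) [Fact p.Prime] [CharP F p]
    (hp : 3 < p) (hm : 2 ≤ m) (hn : 2 ≤ n) :
    ∃ e : (S0 F p m n) ≃ₗ[F] (slSub F m n),
      ∀ D E B : S0 F p m n,
        (B : W F p m n) = bracketW (D : W F p m n) (E : W F p m n) →
        (e B : Matrix (Fin (m + n)) (Fin (m + n)) F) = superComm F m (e D) (e E) :=
  S0_iso_sl_general F p m n

end Cartan
end
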